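/- arXiv:1811.11159 — 2 statements merged into one kernel-verified Lean document; each statement's English description precedes it below -/
import Mathlib

section
/- Let Γ be a finite group, X a ℤ[Γ]-module that is finite free as a ℤ-module, and Y ⊆ X a Γ-stable subgroup. Define the norm map N : X → X by N(x) = Σ_{γ ∈ Γ} γ·x. Then the kernel of the composite map Y → X → (X_Γ)_free (where X_Γ is the module of Γ-coinvariants and (·)_free denotes the quotient by the torsion subgroup) is exactly {y ∈ Y : N(y) = 0}. -/
/-!
The norm `N x = ∑ γ, γ • x` satisfies `N (γ • x) = N x`, so it kills the coinvariant kernel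
`C = span {x - γ • x}`; conversely `|Γ| • x - N x = ∑ γ, (x - γ • x)` lies in `C`. Hence
`r • y ∈ C` with `r` regular gives `r • N y = 0`, so `N y = 0` as `X` is torsion-free, while
`N y = 0` gives `|Γ| • y ∈ C`.
-/

open Submodule

section Coinvariants

variable (R Γ X : Type*) [CommRing R] [Group Γ] [Fintype Γ] [AddCommGroup X] [Module R X]
  [DistribMulAction Γ X] [SMulCommClass Γ R X]

def coinvariantsKer : Submodule R X :=
  span R {z : X | ∃ (γ : Γ) (x : X), z = x - γ • x}

def normMap : X →ₗ[R] X :=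
  ∑ γ : Γ, DistribSMul.toLinearMap R X γ

variable {R Γ X}

theorem normMap_apply (x : X) : normMap R Γ X x = ∑ γ : Γ, γ • x := by
  simp [normMap]

theorem normMap_smul (γ : Γ) (x : X) : normMap R Γ X (γ • x) = normMap R Γ X x := by
  simp only [normMap_apply, smul_smul]
  exact Fintype.sum_equiv (Equiv.mulRight γ) _ _ fun _ => rfl

theorem coinvariantsKer_le_ker_normMap :
    coinvariantsKer R Γ X ≤ LinearMap.ker (normMap R Γ X) := by
  rw [coinvariantsKer, span_le]
  rintro _ ⟨γ, x, rfl⟩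
  simp [normMap_smul]

theorem card_smul_sub_normMap_mem_coinvariantsKer (x : X) :
    (Fintype.card Γ : R) • x - normMap R Γ X x ∈ coinvariantsKer R Γ X := by
  have : (Fintype.card Γ : R) • x - normMap R Γ X x = ∑ γ : Γ, (x - γ • x) := by
    rw [Finset.sum_sub_distrib, normMap_apply, Finset.sum_const, Finset.card_univ,
      Nat.cast_smul_eq_nsmul]
  rw [this]
  exact sum_mem fun γ _ => subset_span ⟨γ, x, rfl⟩

theorem mk_mem_torsion_coinvariants_iff [Module.IsTorsionFree R X]
    (hcard : IsRegular (Fintype.card Γ : R)) (x : X) :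
    (Submodule.Quotient.mk x : X ⧸ coinvariantsKer R Γ X) ∈
        torsion R (X ⧸ coinvariantsKer R Γ X) ↔
      normMap R Γ X x = 0 := by
  simp only [mem_torsion_iff, ← Quotient.mk_smul, Quotient.mk_eq_zero]
  constructor
  · rintro ⟨⟨r, hr⟩, hrx⟩
    have : r • normMap R Γ X x = 0 := by
      simpa using coinvariantsKer_le_ker_normMap hrx
    exact (isRegular_iff_mem_nonZeroDivisors.mpr hr).smul_eq_zero_iff_right.mp this
  · intro hx
    refine ⟨⟨_, isRegular_iff_mem_nonZeroDivisors.mp hcard⟩, ?_⟩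
    simpa [hx] using card_smul_sub_normMap_mem_coinvariantsKer (R := R) (Γ := Γ) x

end Coinvariants

theorem stmt0_general (Γ : Type*) [Group Γ] [Fintype Γ]
    (X : Type*) [AddCommGroup X] [Module ℤ X]
    [Module.Free ℤ X]
    [DistribMulAction Γ X]
    (Y : AddSubgroup X)
    (C : Submodule ℤ X)
    (hC : C = Submodule.span ℤ {z : X | ∃ (γ : Γ) (x : X), z = x - γ • x}) :
    ∀ y ∈ Y,
      ((Submodule.Quotient.mk y : X ⧸ C) ∈ Submodule.torsion ℤ (X ⧸ C)) ↔
        ∑ γ : Γ, γ • y = 0 := by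
  -- `SMulCommClass Γ ℤ X` is only available for the canonical `ℤ`-module structure
  obtain rfl : ‹Module ℤ X› = AddCommGroup.toIntModule X := Subsingleton.elim _ _
  intro y _
  subst hC
  rw [← normMap_apply (R := ℤ)]
  exact mk_mem_torsion_coinvariants_iff (isRegular_iff_ne_zero.mpr (by simp)) y

/-- For a finite group `Γ`, a `ℤ[Γ]`-module `X` that is finite free over `ℤ`,
and a `Γ`-stable subgroup `Y ⊆ X`, the kernel of the composite `Y → X_Γ → (X_Γ)_free`
(coinvariants followed by the torsion-free quotient) is `{y ∈ Y : N(y) = 0}` where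
`N(x) = ∑ γ, γ • x`.  An element of `Y` maps to `0` in `(X_Γ)_free` iff its class in the
coinvariants `X ⧸ C` is torsion. -/
theorem stmt0 (Γ : Type*) [Group Γ] [Fintype Γ]
    (X : Type*) [AddCommGroup X] [Module ℤ X]
    [Module.Free ℤ X] [Module.Finite ℤ X]
    [DistribMulAction Γ X]
    (Y : AddSubgroup X) (hY : ∀ (γ : Γ) (y : X), y ∈ Y → γ • y ∈ Y)
    (C : Submodule ℤ X)
    (hC : C = Submodule.span ℤ {z : X | ∃ (γ : Γ) (x : X), z = x - γ • x}) :
    ∀ y ∈ Y,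
      ((Submodule.Quotient.mk y : X ⧸ C) ∈ Submodule.torsion ℤ (X ⧸ C)) ↔
        ∑ γ : Γ, γ • y = 0 :=
  stmt0_general Γ X Y C hC
end

section
/- Let n ≥ 5 be an integer and let Φ⁺ = {e_i − e_j : 1 ≤ i < j ≤ n} ∪ {e_i + e_j : 1 ≤ i < j ≤ n} ⊂ ℝ^n be the positive roots of D_n. Fix a real number M > n/2, signs ν_2,…,ν_n ∈ {±1}, and t ∈ ℕ with t ≥ 1. Let λ ∈ ℝ^n satisfy |λ − (6t, 2tν_2, …, 2tν_n)|₁ < t/M, where |·|₁ is the ℓ¹-norm. Let m : Φ⁺ → ℕ satisfy Σ_{β∈Φ⁺} m(β)·β = λ, and suppose there is a subset I ⊆ {2,…,n} with |I| = n−2 such that m(e_1 + ν_i e_i) = 0 for all i ∈ I. Then Σ_{β∈Φ⁺} m(β) ≥ (n + 4 − n/(2M))·t. -/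
/-!
The bound is weak LP duality. Pair `λ` with the functional `c = e₁ + ½ ∑_{i ∈ I} νᵢ eᵢ`.
Every positive root `β` that `m` may use satisfies `c·β ≤ 1`: the only roots with `c·β > 1`
are the `e₁ + νᵢ eᵢ` with `i ∈ I`, which `m` avoids. Hence `c·λ ≤ ∑ m(β)`. On the other hand
`c·(6t, 2tν₂, …, 2tνₙ) = 6t + (n - 2)t`, and since `|cᵢ| ≤ 1` moving to `λ` costs less than
`t/M ≤ nt/(2M)`.
-/

open Finset

section Duality

variable {ι : Type*} [Fintype ι]

theorem dotProduct_sum_nsmul_le_sum {Φ : Finset (ι → ℝ)} {m : (ι → ℝ) → ℕ} {c : ι → ℝ}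
    (hc : ∀ β ∈ Φ, m β ≠ 0 → c ⬝ᵥ β ≤ 1) :
    c ⬝ᵥ ∑ β ∈ Φ, (m β : ℝ) • β ≤ ∑ β ∈ Φ, (m β : ℝ) := by
  rw [dotProduct_sum]
  refine sum_le_sum fun β hβ => ?_
  rw [dotProduct_smul, smul_eq_mul]
  by_cases hmβ : m β = 0
  · simp [hmβ]
  · exact mul_le_of_le_one_right (Nat.cast_nonneg _) (hc β hβ hmβ)

theorem dotProduct_sub_sum_abs_sub_le {c x y : ι → ℝ} (hc : ∀ i, |c i| ≤ 1) :
    c ⬝ᵥ y - ∑ i, |x i - y i| ≤ c ⬝ᵥ x := by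
  have hdiff : |c ⬝ᵥ (x - y)| ≤ ∑ i, |x i - y i| := by
    refine (abs_sum_le_sum_abs _ _).trans (sum_le_sum fun i _ => ?_)
    rw [abs_mul]
    exact mul_le_of_le_one_left (abs_nonneg _) (hc i)
  rw [dotProduct_sub] at hdiff
  linarith [neg_abs_le (c ⬝ᵥ x - c ⬝ᵥ y)]

end Duality

section Certificate

variable {ι : Type*} [DecidableEq ι] (z : ι) (I : Finset ι) (ν : ι → ℝ)

noncomputable def dnCertificate (i : ι) : ℝ :=
  if i = z then 1 else if i ∈ I then ν i / 2 else 0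

variable {z I ν}

theorem abs_dnCertificate_le_half (hν : ∀ i ∈ I, ν i = 1 ∨ ν i = -1) {i : ι} (hi : i ≠ z) :
    |dnCertificate z I ν i| ≤ 1 / 2 := by
  unfold dnCertificate
  by_cases hiI : i ∈ I
  · rcases hν i hiI with h | h <;> norm_num [hi, hiI, h]
  · norm_num [hi, hiI]

theorem abs_dnCertificate_le_one (hν : ∀ i ∈ I, ν i = 1 ∨ ν i = -1) (i : ι) :
    |dnCertificate z I ν i| ≤ 1 := by
  by_cases hi : i = z
  · simp [dnCertificate, hi]
  · linarith [abs_dnCertificate_le_half hν hi]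

theorem dnCertificate_dotProduct_single_add_smul_single_le_one [Fintype ι]
    (hν : ∀ i ∈ I, ν i = 1 ∨ ν i = -1) {p q : ι} {s : ℝ} (hs : s = 1 ∨ s = -1) (hqz : q ≠ z)
    (hβ : ¬(p = z ∧ q ∈ I ∧ ν q = s)) :
    dnCertificate z I ν ⬝ᵥ (Pi.single p 1 + s • Pi.single q 1) ≤ 1 := by
  rw [dotProduct_add, dotProduct_smul, dotProduct_single, dotProduct_single, smul_eq_mul,
    mul_one, mul_one]
  have habs_s : |s| = 1 := by rcases hs with rfl | rfl <;> simp
  by_cases hpz : p = z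
  · have hcp : dnCertificate z I ν p = 1 := if_pos hpz
    suffices s * dnCertificate z I ν q ≤ 0 by linarith
    by_cases hqI : q ∈ I
    · have hνs : ν q ≠ s := fun h => hβ ⟨hpz, hqI, h⟩
      rcases hν q hqI with h | h <;> rcases hs with rfl | rfl <;>
        first | exact absurd h hνs | norm_num [dnCertificate, hqz, hqI, h]
    · simp [dnCertificate, hqz, hqI]
  · have hp := abs_dnCertificate_le_half hν hpz
    have hq := abs_dnCertificate_le_half hν hqz
    have hsq : |s * dnCertificate z I ν q| ≤ 1 / 2 := by rwa [abs_mul, habs_s, one_mul]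
    linarith [le_abs_self (dnCertificate z I ν p), le_abs_self (s * dnCertificate z I ν q)]

theorem dnCertificate_dotProduct_ite [Fintype ι] (hν : ∀ i ∈ I, ν i = 1 ∨ ν i = -1)
    (hzI : z ∉ I) (a b : ℝ) :
    dnCertificate z I ν ⬝ᵥ (fun i => if i = z then a else b * ν i) = a + b / 2 * #I := by
  have hterm : ∀ i, dnCertificate z I ν i * (if i = z then a else b * ν i)
      = (if i = z then a else 0) + (if i ∈ I then b / 2 else 0) := by
    intro i
    by_cases hi : i = z
    · subst hi; simp [dnCertificate, hzI]
    · by_cases hiI : i ∈ I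
      · rcases hν i hiI with h | h <;> simp [dnCertificate, hi, hiI, h] <;> ring
      · simp [dnCertificate, hi, hiI]
  simp only [dotProduct, hterm, sum_add_distrib, sum_ite_eq', mem_univ, if_true, sum_ite_mem,
    univ_inter, sum_const, nsmul_eq_mul]
  ring

end Certificate

theorem div_le_div_two_mul_mul {a x M : ℝ} (hM : 0 < M) (ha : 0 ≤ a) (hx : 2 ≤ x) :
    a / M ≤ x / (2 * M) * a := by
  rw [div_mul_eq_mul_div, ← mul_div_mul_left a M two_ne_zero]
  exact div_le_div_of_nonneg_right (by nlinarith) (by positivity)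

noncomputable def positiveRootsD (ι : Type*) [LinearOrder ι] [Fintype ι] : Finset (ι → ℝ) :=
  ((univ : Finset (ι × ι)).filter fun p => p.1 < p.2).image
      (fun p => Pi.single p.1 (1 : ℝ) - Pi.single p.2 (1 : ℝ)) ∪
    ((univ : Finset (ι × ι)).filter fun p => p.1 < p.2).image
      (fun p => Pi.single p.1 (1 : ℝ) + Pi.single p.2 (1 : ℝ))

theorem exists_eq_single_add_smul_single_of_mem_positiveRootsD {ι : Type*} [LinearOrder ι]
    [Fintype ι] {β : ι → ℝ} (hβ : β ∈ positiveRootsD ι) :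
    ∃ p q : ι, ∃ s : ℝ, p < q ∧ (s = 1 ∨ s = -1) ∧ β = Pi.single p 1 + s • Pi.single q 1 := by
  rcases mem_union.mp hβ with h | h <;> obtain ⟨⟨p, q⟩, hpq, rfl⟩ := mem_image.mp h <;>
    have hpq : p < q := (mem_filter.mp hpq).2
  · exact ⟨p, q, -1, hpq, Or.inr rfl, by rw [neg_one_smul, sub_eq_add_neg]⟩
  · exact ⟨p, q, 1, hpq, Or.inl rfl, by rw [one_smul]⟩

/-- Let `n ≥ 5`, `Φ⁺ = {e_i ± e_j : i < j} ⊂ ℝ^n` the positive roots of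
`D_n`, `M > n/2`, signs `ν_2,…,ν_n ∈ {±1}`, `t ≥ 1`.  If `λ ∈ ℝ^n` satisfies
`|λ − (6t, 2tν_2, …, 2tν_n)|₁ < t/M`, `m : Φ⁺ → ℕ` is a Kostant partition of `λ`
(i.e. `∑ m(β)·β = λ`), and `m` vanishes on `e_1 + ν_i e_i` for all `i` in a subset
`I ⊆ {2,…,n}` of size `n−2`, then `∑_β m(β) ≥ (n + 4 − n/(2M))·t`. -/
theorem stmt17 (n : ℕ) (hn : 5 ≤ n) (M : ℝ) (hM : (n : ℝ) / 2 < M)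
    (ν : Fin n → ℝ) (hν : ∀ i : Fin n, 1 ≤ (i : ℕ) → ν i = 1 ∨ ν i = -1)
    (t : ℕ)
    (Φ : Finset (Fin n → ℝ))
    (hΦ : Φ =
      (((Finset.univ : Finset (Fin n × Fin n)).filter fun p => p.1 < p.2).image
          fun p => Pi.single p.1 (1 : ℝ) - Pi.single p.2 (1 : ℝ)) ∪
        (((Finset.univ : Finset (Fin n × Fin n)).filter fun p => p.1 < p.2).image
          fun p => Pi.single p.1 (1 : ℝ) + Pi.single p.2 (1 : ℝ)))
    (lam : Fin n → ℝ)
    (hlam : ∑ i, |lam i - (if (i : ℕ) = 0 then 6 * (t : ℝ) else 2 * t * ν i)| < t / M)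
    (m : (Fin n → ℝ) → ℕ)
    (hm : ∑ β ∈ Φ, (m β : ℝ) • β = lam)
    (I : Finset (Fin n)) (hIcard : I.card = n - 2) (hI1 : ∀ i ∈ I, 1 ≤ (i : ℕ))
    (hvanish : ∀ i ∈ I,
      m (Pi.single (⟨0, by omega⟩ : Fin n) (1 : ℝ) + ν i • (Pi.single i (1 : ℝ) : Fin n → ℝ)) = 0) :
    ((n : ℝ) + 4 - n / (2 * M)) * t ≤ ∑ β ∈ Φ, (m β : ℝ) := by
  set z : Fin n := ⟨0, by omega⟩
  set c := dnCertificate z I ν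
  have hνI : ∀ i ∈ I, ν i = 1 ∨ ν i = -1 := fun i hi => hν i (hI1 i hi)
  have hzI : z ∉ I := fun h => by simpa [z] using hI1 z h
  have hroots : ∀ β ∈ Φ, m β ≠ 0 → c ⬝ᵥ β ≤ 1 := by
    rintro β hβ hmβ
    obtain ⟨p, q, s, hpq, hs, rfl⟩ := exists_eq_single_add_smul_single_of_mem_positiveRootsD
      (hΦ ▸ hβ)
    refine dnCertificate_dotProduct_single_add_smul_single_le_one hνI hs
      (by rintro rfl; exact Nat.not_lt_zero _ hpq) ?_
    rintro ⟨rfl, hqI, rfl⟩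
    exact hmβ (hvanish q hqI)
  set μ : Fin n → ℝ := fun i => if i = z then 6 * (t : ℝ) else 2 * t * ν i
  have hlamμ : ∑ i, |lam i - μ i| < t / M := by simpa only [μ, z, Fin.ext_iff] using hlam
  have hcμ : c ⬝ᵥ μ = (n + 4) * t := by
    rw [dnCertificate_dotProduct_ite hνI hzI, hIcard, Nat.cast_sub (by omega)]
    push_cast
    ring
  have hperturb : c ⬝ᵥ μ - ∑ i, |lam i - μ i| ≤ c ⬝ᵥ lam :=
    dotProduct_sub_sum_abs_sub_le (abs_dnCertificate_le_one hνI)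
  have hslack : (t : ℝ) / M ≤ n / (2 * M) * t :=
    div_le_div_two_mul_mul (lt_of_le_of_lt (by positivity) hM) (Nat.cast_nonneg t)
      (by exact_mod_cast (by omega : 2 ≤ n))
  calc ((n : ℝ) + 4 - n / (2 * M)) * t ≤ (n + 4) * t - t / M := by linarith
    _ ≤ c ⬝ᵥ lam := by linarith
    _ = c ⬝ᵥ ∑ β ∈ Φ, (m β : ℝ) • β := by rw [hm]
    _ ≤ ∑ β ∈ Φ, (m β : ℝ) := dotProduct_sum_nsmul_le_sum hroots
end
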